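/- Let r ≥ 0 be an integer and F̂ = (f̂_{jm})_{j∈{0,1}, 0≤m≤r} a 2×(r+1) real matrix. Then the polynomial P_r(F̂), of degree at most 2r+1, satisfies the two-point Hermite interpolation conditions: for every 0 ≤ ℓ ≤ r, (P_r(F̂))^{(ℓ)}(0) = f̂_{0ℓ} and (P_r(F̂))^{(ℓ)}(−1) = f̂_{1ℓ}. -/

import Mathlib

open Real Set

noncomputable section

/-- The Hermite basis polynomial
`P_m^0(x) = (1/m!) x^m (1+x)^{r+1} ∑_{n=0}^{r-m} (-x)^n C(r+n, n)`. -/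
def P0 (r m : ℕ) (x : ℝ) : ℝ :=
  (1 / (Nat.factorial m) : ℝ) * x ^ m * (1 + x) ^ (r + 1) *
    ∑ n ∈ Finset.range (r - m + 1), (-x) ^ n * (Nat.choose (r + n) n : ℝ)

/-- The Hermite basis polynomial
`P_m^1(x) = (1/m!) (1+x)^m (-x)^{r+1} ∑_{n=0}^{r-m} (1+x)^n C(r+n, n)`. -/
def P1 (r m : ℕ) (x : ℝ) : ℝ :=
  (1 / (Nat.factorial m) : ℝ) * (1 + x) ^ m * (-x) ^ (r + 1) *
    ∑ n ∈ Finset.range (r - m + 1), (1 + x) ^ n * (Nat.choose (r + n) n : ℝ)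

/-- The two-point Hermite interpolation polynomial `P_r(F̂)` of a boundary
data matrix `F̂`. -/
def Pmat (r : ℕ) (A : Fin 2 → Fin (r + 1) → ℝ) (x : ℝ) : ℝ :=
  ∑ m : Fin (r + 1), A 0 m * P0 r (m : ℕ) x + ∑ m : Fin (r + 1), A 1 m * P1 r (m : ℕ) x

/-- The max-norm of a `2 × (r+1)` matrix. -/
def maxNorm {r : ℕ} (A : Fin 2 → Fin (r + 1) → ℝ) : ℝ :=
  Finset.univ.sup' Finset.univ_nonempty (fun p : Fin 2 × Fin (r + 1) => |A p.1 p.2|)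

/-!
Both families come from one polynomial `B_m(y) = y^m (1 - y)^{r+1} T(y) / m!`, where `T`
is the truncation at degree `r - m` of `(1 - y)^{-(r+1)} = ∑ C(r+n, n) y^n`:
`P_m^0(x) = (-1)^m B_m(-x)` and `P_m^1(x) = B_m(1 + x)`. Since `(1 - y)^{r+1} T(y) ≡ 1` modulo
`y^{r-m+1}`, the Taylor coefficients of `B_m` at `0` up to order `r` are those of `y^m / m!`; and
`(1 - y)^{r+1}` divides `B_m`, so its derivatives of order at most `r` vanish at `y = 1`.
-/

open Polynomial
open scoped Nat

namespace Polynomial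

theorem iteratedDeriv_eval {𝕜 : Type*} [NontriviallyNormedField 𝕜] (p : 𝕜[X]) (n : ℕ) :
    iteratedDeriv n (fun x => p.eval x) = fun x => (derivative^[n] p).eval x := by
  induction n with
  | zero => simp
  | succ n ih =>
    rw [iteratedDeriv_succ, ih]
    funext x
    rw [Function.iterate_succ_apply']
    exact Polynomial.deriv _

theorem eval_iterate_derivative_eq_zero_of_pow_dvd {R : Type*} [CommRing R] {p : R[X]} {c : R}
    {k n : ℕ} (h : (X - C c) ^ k ∣ p) (hn : n < k) : (derivative^[n] p).eval c = 0 :=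
  dvd_iff_isRoot.mp <| (dvd_pow_self _ <| Nat.sub_ne_zero_of_lt hn).trans
    (pow_sub_dvd_iterate_derivative_of_pow_dvd _ h)

variable {R : Type*} [CommSemiring R]

theorem eval_iterate_derivative_eq_factorial_mul_coeff_taylor (p : R[X]) (c : R) (n : ℕ) :
    (derivative^[n] p).eval c = n ! * (taylor c p).coeff n := by
  rw [taylor_coeff, ← factorial_smul_hasseDeriv, LinearMap.smul_apply, eval_smul, nsmul_eq_mul]

theorem coeff_mul_trunc_of_mul_eq_one {g : R[X]} {f : PowerSeries R}
    (h : (g : PowerSeries R) * f = 1) {j n : ℕ} (hj : j < n) :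
    (g * PowerSeries.trunc n f).coeff j = if j = 0 then 1 else 0 := by
  calc (g * PowerSeries.trunc n f).coeff j
      = (PowerSeries.trunc n
          (g * (PowerSeries.trunc n f : PowerSeries R) : PowerSeries R)).coeff j := by
        rw [PowerSeries.coeff_trunc, if_pos hj, ← coe_mul, coeff_coe]
    _ = (PowerSeries.trunc n (1 : PowerSeries R)).coeff j := by
        rw [PowerSeries.trunc_mul_trunc, h]
    _ = if j = 0 then 1 else 0 := by
        rw [PowerSeries.coeff_trunc, if_pos hj, PowerSeries.coeff_one]

end Polynomial

namespace TwoPointHermite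

variable {K : Type*} [Field K]

def basis (r m : ℕ) : K[X] :=
  C (m ! : K)⁻¹ * X ^ m * (1 - X) ^ (r + 1) *
    PowerSeries.trunc (r - m + 1) (PowerSeries.mk fun n => ((r + n).choose r : K))

theorem eval_trunc_mk_choose (r k : ℕ) (y : K) :
    (PowerSeries.trunc (k + 1) (PowerSeries.mk fun n => ((r + n).choose r : K))).eval y =
      ∑ n ∈ Finset.range (k + 1), y ^ n * ((r + n).choose n : K) := by
  simp only [PowerSeries.trunc_apply, ← Finset.range_eq_Ico, eval_finsetSum, eval_monomial,
    PowerSeries.coeff_mk]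
  exact Finset.sum_congr rfl fun n _ => by rw [Nat.choose_symm_add, mul_comm]

theorem coeff_basis {r m ℓ : ℕ} (hℓ : ℓ ≤ r) :
    (basis r m : K[X]).coeff ℓ = if ℓ = m then (m ! : K)⁻¹ else 0 := by
  have hseries : ((((1 - X) ^ (r + 1) : K[X]) : PowerSeries K) *
      PowerSeries.mk fun n => ((r + n).choose r : K)) = 1 := by
    rw [mul_comm, coe_pow, coe_sub, coe_one, coe_X]
    exact PowerSeries.mk_add_choose_mul_one_sub_pow_eq_one K r
  rw [basis, mul_assoc, mul_assoc, coeff_C_mul, coeff_X_pow_mul']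
  split_ifs
  · rw [coeff_mul_trunc_of_mul_eq_one hseries (by omega), if_pos (by omega), mul_one]
  · rw [coeff_mul_trunc_of_mul_eq_one hseries (by omega), if_neg (by omega), mul_zero]
  · omega
  · rw [mul_zero]

theorem one_sub_X_pow_dvd_basis (r m : ℕ) : (1 - X) ^ (r + 1) ∣ (basis r m : K[X]) :=
  ⟨C (m ! : K)⁻¹ * X ^ m *
    PowerSeries.trunc (r - m + 1) (PowerSeries.mk fun n => ((r + n).choose r : K)),
    by rw [basis]; ring⟩

def basisAtZero (r m : ℕ) : K[X] :=
  C ((-1) ^ m) * (basis r m).comp (-X)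

def basisAtNegOne (r m : ℕ) : K[X] :=
  taylor 1 (basis r m)

theorem P0_eq_eval (r m : ℕ) (x : ℝ) : P0 r m x = (basisAtZero r m).eval x := by
  have hsign : (-1 : ℝ) ^ m * (-x) ^ m = x ^ m := by rw [← mul_pow]; ring
  simp only [P0, basisAtZero, basis, eval_mul, eval_C, eval_comp, eval_pow, eval_sub,
    eval_one, eval_neg, eval_X, eval_trunc_mk_choose, sub_neg_eq_add, ← hsign]
  ring

theorem P1_eq_eval (r m : ℕ) (x : ℝ) : P1 r m x = (basisAtNegOne r m).eval x := by
  simp only [P1, basisAtNegOne, basis, taylor_eval, eval_mul, eval_C, eval_pow, eval_sub,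
    eval_one, eval_X, eval_trunc_mk_choose, add_comm x 1]
  ring

theorem eval_iterate_derivative_basisAtZero_neg_one {r m ℓ : ℕ} (hℓ : ℓ ≤ r) :
    (derivative^[ℓ] (basisAtZero r m : K[X])).eval (-1) = 0 := by
  refine eval_iterate_derivative_eq_zero_of_pow_dvd ?_ (Nat.lt_add_one_of_le hℓ)
  obtain ⟨q, hq⟩ := one_sub_X_pow_dvd_basis (K := K) r m
  refine ⟨C ((-1) ^ m) * q.comp (-X), ?_⟩
  rw [basisAtZero, hq, mul_comp, pow_comp, sub_comp, one_comp, X_comp]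
  simp only [map_neg, map_one]
  ring

theorem eval_iterate_derivative_basisAtNegOne_zero {r m ℓ : ℕ} (hℓ : ℓ ≤ r) :
    (derivative^[ℓ] (basisAtNegOne r m : K[X])).eval 0 = 0 := by
  refine eval_iterate_derivative_eq_zero_of_pow_dvd ?_ (Nat.lt_add_one_of_le hℓ)
  obtain ⟨q, hq⟩ := one_sub_X_pow_dvd_basis (K := K) r m
  refine ⟨(-1) ^ (r + 1) * taylor 1 q, ?_⟩
  rw [basisAtNegOne, hq, taylor_mul, taylor_pow, map_sub, taylor_one, taylor_X, map_zero]
  ring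

variable [CharZero K]

theorem eval_iterate_derivative_basisAtZero_zero {r m ℓ : ℕ} (hℓ : ℓ ≤ r) :
    (derivative^[ℓ] (basisAtZero r m : K[X])).eval 0 = if ℓ = m then 1 else 0 := by
  rw [eval_iterate_derivative_eq_factorial_mul_coeff_taylor, taylor_zero, basisAtZero,
    coeff_C_mul, show (-X : K[X]) = C (-1) * X by simp, comp_C_mul_X_coeff, coeff_basis hℓ]
  split_ifs with h
  · subst h
    have hfac : (ℓ ! : K) ≠ 0 := Nat.cast_ne_zero.mpr ℓ.factorial_ne_zero
    calc (ℓ ! : K) * ((-1) ^ ℓ * ((ℓ ! : K)⁻¹ * (-1) ^ ℓ))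
        = (ℓ ! * (ℓ ! : K)⁻¹) * ((-1) ^ ℓ * (-1) ^ ℓ) := by ring
      _ = 1 := by rw [mul_inv_cancel₀ hfac, ← mul_pow]; norm_num
  · simp

theorem eval_iterate_derivative_basisAtNegOne_neg_one {r m ℓ : ℕ} (hℓ : ℓ ≤ r) :
    (derivative^[ℓ] (basisAtNegOne r m : K[X])).eval (-1) = if ℓ = m then 1 else 0 := by
  rw [eval_iterate_derivative_eq_factorial_mul_coeff_taylor, basisAtNegOne, taylor_taylor,
    neg_add_cancel, taylor_zero, coeff_basis hℓ]
  split_ifs with h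
  · subst h
    exact mul_inv_cancel₀ (Nat.cast_ne_zero.mpr ℓ.factorial_ne_zero)
  · simp

end TwoPointHermite

open TwoPointHermite in
/-- The two-point Hermite interpolation conditions for `P_r(F̂)`:
for every `0 ≤ ℓ ≤ r`, `(P_r(F̂))^{(ℓ)}(0) = f̂_{0ℓ}` and `(P_r(F̂))^{(ℓ)}(-1) = f̂_{1ℓ}`. -/
theorem Pmat_hermite_interpolation (r : ℕ) (Fh : Fin 2 → Fin (r + 1) → ℝ)
    (ℓ : Fin (r + 1)) :
    iteratedDeriv (ℓ : ℕ) (Pmat r Fh) 0 = Fh 0 ℓ ∧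
    iteratedDeriv (ℓ : ℕ) (Pmat r Fh) (-1) = Fh 1 ℓ := by
  set P : ℝ[X] := ∑ m : Fin (r + 1), C (Fh 0 m) * basisAtZero r m +
    ∑ m : Fin (r + 1), C (Fh 1 m) * basisAtNegOne r m
  have hPmat : Pmat r Fh = fun x => P.eval x := by
    funext x
    simp only [P, Pmat, P0_eq_eval, P1_eq_eval, eval_add, eval_finsetSum, eval_mul, eval_C]
  have hℓ : (ℓ : ℕ) ≤ r := Fin.is_le ℓ
  rw [hPmat, iteratedDeriv_eval]
  simp only [P, iterate_map_add, iterate_derivative_sum, iterate_derivative_C_mul, eval_add,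
    eval_finsetSum, eval_mul, eval_C, eval_iterate_derivative_basisAtZero_zero hℓ,
    eval_iterate_derivative_basisAtZero_neg_one hℓ,
    eval_iterate_derivative_basisAtNegOne_zero hℓ, eval_iterate_derivative_basisAtNegOne_neg_one hℓ,
    Fin.val_inj, mul_ite, mul_one, mul_zero, Finset.sum_ite_eq, Finset.sum_const_zero,
    Finset.mem_univ, if_true, add_zero, zero_add, and_self]
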